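/- For all integers n ≥ 0 and k ≥ 1, the Daehee polynomial of order k satisfies D_n^(k)(x) = Σ_{l=0}^n S_1(n,l) B_l^{(k)}(x) as an identity of polynomials in x over ℚ, where S_1 denotes the signed Stirling numbers of the first kind and B_l^{(k)}(x) are the Bernoulli polynomials of order k. -/

import Mathlib

open PowerSeries Polynomial Finset

/-- `log(1+t) = Σ_{n≥1} (-1)^{n+1} t^n / n` as a formal power series over ℚ. -/
noncomputable def logOneAdd : PowerSeries ℚ :=
  PowerSeries.mk fun n => if n = 0 then 0 else (-1) ^ (n + 1) / (n : ℚ)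

/-- `−log(1−t) = Σ_{n≥1} t^n / n` as a formal power series over ℚ. -/
noncomputable def negLogOneSub : PowerSeries ℚ :=
  PowerSeries.mk fun n => if n = 0 then 0 else 1 / (n : ℚ)

/-- `e^t = Σ_{n≥0} t^n / n!` as a formal power series over ℚ. -/
noncomputable def expQ : PowerSeries ℚ :=
  PowerSeries.mk fun n => 1 / (n.factorial : ℚ)

/-- `log(1+t)` as a formal power series with coefficients in ℚ[x]. -/
noncomputable def logOneAddP : PowerSeries (Polynomial ℚ) :=
  PowerSeries.mk fun n => Polynomial.C (if n = 0 then 0 else (-1) ^ (n + 1) / (n : ℚ))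

/-- `−log(1−t)` as a formal power series with coefficients in ℚ[x]. -/
noncomputable def negLogOneSubP : PowerSeries (Polynomial ℚ) :=
  PowerSeries.mk fun n => Polynomial.C (if n = 0 then 0 else 1 / (n : ℚ))

/-- `e^t` as a formal power series with coefficients in ℚ[x]. -/
noncomputable def expP : PowerSeries (Polynomial ℚ) :=
  PowerSeries.mk fun n => Polynomial.C (1 / (n.factorial : ℚ))

/-- `e^{xt} = Σ_{n≥0} x^n t^n / n!` as a formal power series with coefficients in ℚ[x]. -/
noncomputable def expXT : PowerSeries (Polynomial ℚ) :=
  PowerSeries.mk fun n => Polynomial.C (1 / (n.factorial : ℚ)) * Polynomial.X ^ n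

/-- The binomial polynomial `x(x−1)⋯(x−n+1)/n! ∈ ℚ[x]`. -/
noncomputable def binomPoly (n : ℕ) : Polynomial ℚ :=
  Polynomial.C (1 / (n.factorial : ℚ)) *
    ∏ i ∈ Finset.range n, (Polynomial.X - Polynomial.C (i : ℚ))

/-- `(1+t)^x = Σ_{n≥0} C(x,n) t^n` as a formal power series with coefficients in ℚ[x]. -/
noncomputable def onePlusTX : PowerSeries (Polynomial ℚ) :=
  PowerSeries.mk binomPoly

/-- `(1−t)^x = Σ_{n≥0} (−1)^n C(x,n) t^n` as a formal power series with coefficients in ℚ[x]. -/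
noncomputable def oneSubTX : PowerSeries (Polynomial ℚ) :=
  PowerSeries.mk fun n => (-1) ^ n * binomPoly n

/-!
Substituting `t ↦ log (1 + t)` is a ring endomorphism of `ℚ[x]⟦t⟧`. It sends `e^t` to `1 + t` and
`e^{xt}` to `(1 + t)^x`: in both identities the two sides solve `(1 + t) F' = a F` with `F(0) = 1`
(for `a = 1`, resp. `a = x`), and this equation has a unique solution. Applied to
`t^k e^{xt} = (e^t - 1)^k Σ B_l t^l / l!` it gives `log(1+t)^k (1+t)^x = t^k Σ B_l log(1+t)^l / l!`,
so `Σ D_n t^n / n! = Σ B_l log(1+t)^l / l!`. Comparing coefficients of `t^n`, the weight of `B_l`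
is `n!/l! [t^n] log(1+t)^l`, and comparing coefficients of `(1+t)^x = e^{x log(1+t)}` shows that
this is the coefficient of `x^l` in `x(x-1)⋯(x-n+1)`, i.e. `S_1(n,l)`.
-/

namespace PowerSeries

section CommSemiring

variable {A : Type*} [CommSemiring A]

theorem coeff_one_add_X_mul_derivative (F : A⟦X⟧) (n : ℕ) :
    coeff n ((1 + X) * d⁄dX A F) = coeff (n + 1) F * (n + 1) + coeff n F * n := by
  rw [add_mul, one_mul, map_add, coeff_derivative]
  cases n with
  | zero => simp
  | succ n => rw [coeff_succ_X_mul, coeff_derivative]; push_cast; ring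

theorem coeff_pow_eq_zero_of_lt {b : A⟦X⟧} (hb : constantCoeff b = 0) {n m : ℕ} (h : n < m) :
    coeff n (b ^ m) = 0 :=
  X_pow_dvd_iff.mp (pow_dvd_pow_of_dvd (X_dvd_iff.mpr hb) m) n h

end CommSemiring

variable {A : Type*} [CommRing A]

theorem eq_of_one_add_X_mul_derivative_eq_C_mul [IsAddTorsionFree A] (a : A) {F G : A⟦X⟧}
    (hF : (1 + X) * d⁄dX A F = C a * F) (hG : (1 + X) * d⁄dX A G = C a * G)
    (h0 : constantCoeff F = constantCoeff G) : F = G := by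
  rw [← sub_eq_zero]
  have hH : (1 + X) * d⁄dX A (F - G) = C a * (F - G) := by
    rw [map_sub, mul_sub, mul_sub, hF, hG]
  ext n
  induction n with
  | zero => simp [h0]
  | succ n ih =>
    have hrec := congrArg (coeff n) hH
    rw [coeff_one_add_X_mul_derivative, coeff_C_mul, ih, map_zero] at hrec
    have hsmul : (n + 1) • coeff (n + 1) (F - G) = (n + 1) • 0 := by
      rw [nsmul_eq_mul, smul_zero]
      push_cast
      linear_combination hrec
    exact nsmul_right_injective n.succ_ne_zero hsmul

theorem coeff_subst_eq_sum_range {b : A⟦X⟧} (hb : constantCoeff b = 0) (f : A⟦X⟧) (n : ℕ) :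
    coeff n (f.subst b) = ∑ m ∈ range (n + 1), coeff m f * coeff n (b ^ m) := by
  rw [coeff_subst' (HasSubst.of_constantCoeff_zero' hb)]
  refine finsum_eq_sum_of_support_subset _ fun m hm => ?_
  by_contra hmn
  simp only [coe_range, Set.mem_Iio, not_lt] at hmn
  simp [coeff_pow_eq_zero_of_lt hb (Nat.lt_of_succ_le hmn)] at hm

variable [Algebra ℚ A]

theorem coeff_log_pow (n m : ℕ) :
    coeff n (log A ^ m) = algebraMap ℚ A (coeff n (log ℚ ^ m)) := by
  rw [← map_log (algebraMap ℚ A), ← map_pow, coeff_map]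

theorem one_add_X_mul_derivative_log : (1 + X) * d⁄dX A (log A) = 1 := by
  ext n
  rw [coeff_one_add_X_mul_derivative, coeff_log, coeff_log, coeff_one]
  rcases n with _ | n
  · simp
  · have key : (-1 : ℚ) ^ (n + 1 + 1 + 1) / (n + 1 + 1 : ℕ) * (n + 1 + 1 : ℕ)
        + (-1) ^ (n + 1 + 1) / (n + 1 : ℕ) * (n + 1 : ℕ) = 0 := by
      field_simp
      ring
    have hkey := congrArg (algebraMap ℚ A) key
    rw [map_add, map_mul, map_mul, map_natCast, map_natCast, map_zero] at hkey
    simp only [Nat.add_eq_zero_iff, one_ne_zero, and_false, if_false]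
    exact_mod_cast hkey

theorem derivative_rescale_exp (a : A) :
    d⁄dX A (rescale a (exp A)) = C a * rescale a (exp A) := by
  ext n
  rw [coeff_derivative, coeff_C_mul, coeff_rescale, coeff_rescale, coeff_exp, coeff_exp]
  have key : 1 / ((n + 1).factorial : ℚ) * (n + 1) = 1 / n.factorial := by
    rw [Nat.factorial_succ]
    push_cast
    field_simp
  rw [← key, map_mul, map_add, map_natCast, map_one, pow_succ]
  ring

theorem one_add_X_mul_derivative_rescale_exp_subst_log (a : A) :
    (1 + X) * d⁄dX A ((rescale a (exp A)).subst (log A)) =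
      C a * (rescale a (exp A)).subst (log A) := by
  rw [derivative_subst HasSubst.log, derivative_rescale_exp, subst_mul HasSubst.log, mul_comm,
    mul_assoc, mul_comm _ (1 + X), one_add_X_mul_derivative_log, mul_one, subst_C]
  rfl

theorem rescale_exp_subst_log_eq [IsAddTorsionFree A] {a : A} {G : A⟦X⟧}
    (hG : (1 + X) * d⁄dX A G = C a * G) (h0 : constantCoeff G = 1) :
    (rescale a (exp A)).subst (log A) = G := by
  refine eq_of_one_add_X_mul_derivative_eq_C_mul a
    (one_add_X_mul_derivative_rescale_exp_subst_log a) hG ?_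
  rw [h0, ← coeff_zero_eq_constantCoeff_apply, coeff_subst_eq_sum_range constantCoeff_log]
  simp

theorem exp_subst_log [IsAddTorsionFree A] : (exp A).subst (log A) = 1 + X := by
  simpa using rescale_exp_subst_log_eq (a := (1 : A)) (G := 1 + X) (by simp) (by simp)

end PowerSeries

theorem logOneAddP_eq_log : logOneAddP = log ℚ[X] := by
  refine PowerSeries.ext fun n => ?_
  simp only [logOneAddP, PowerSeries.coeff_mk, PowerSeries.coeff_log, Polynomial.algebraMap_eq]
  split_ifs <;> simp

theorem expP_eq_exp : expP = exp ℚ[X] := by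
  refine PowerSeries.ext fun n => ?_
  simp [expP]

theorem expXT_eq_rescale_exp : expXT = rescale Polynomial.X (exp ℚ[X]) := by
  refine PowerSeries.ext fun n => ?_
  rw [expXT, PowerSeries.coeff_mk, PowerSeries.coeff_rescale, PowerSeries.coeff_exp,
    Polynomial.algebraMap_eq, mul_comm]

theorem binomPoly_succ (n : ℕ) :
    (n + 1 : ℚ[X]) * binomPoly (n + 1) = (Polynomial.X - Polynomial.C (n : ℚ)) * binomPoly n := by
  have key : ((n : ℚ) + 1) * (1 / (n + 1).factorial) = 1 / n.factorial := by
    rw [Nat.factorial_succ]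
    push_cast
    field_simp
  rw [binomPoly, binomPoly, prod_range_succ, ← key, Polynomial.C_mul]
  simp only [map_add, map_natCast, map_one]
  ring

theorem one_add_X_mul_derivative_onePlusTX :
    (1 + PowerSeries.X) * d⁄dX ℚ[X] onePlusTX = PowerSeries.C Polynomial.X * onePlusTX := by
  refine PowerSeries.ext fun n => ?_
  rw [PowerSeries.coeff_one_add_X_mul_derivative, PowerSeries.coeff_C_mul, onePlusTX,
    PowerSeries.coeff_mk, PowerSeries.coeff_mk, mul_comm, binomPoly_succ]
  simp only [map_natCast]
  ring

theorem expXT_subst_log : expXT.subst (log ℚ[X]) = onePlusTX := by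
  rw [expXT_eq_rescale_exp]
  exact PowerSeries.rescale_exp_subst_log_eq one_add_X_mul_derivative_onePlusTX
    (by simp [onePlusTX, binomPoly])

theorem coeff_prod_range_X_sub_C (n m : ℕ) :
    (∏ i ∈ range n, (Polynomial.X - Polynomial.C (i : ℚ))).coeff m =
      n.factorial / m.factorial * PowerSeries.coeff n (log ℚ ^ m) := by
  have h := congrArg (PowerSeries.coeff n) expXT_subst_log
  rw [PowerSeries.coeff_subst_eq_sum_range PowerSeries.constantCoeff_log, onePlusTX,
    PowerSeries.coeff_mk, binomPoly] at h
  have hterm : ∀ j ∈ range (n + 1),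
      PowerSeries.coeff j expXT * PowerSeries.coeff n (log ℚ[X] ^ j) =
        Polynomial.C (1 / j.factorial * PowerSeries.coeff n (log ℚ ^ j)) * Polynomial.X ^ j := by
    intro j _
    rw [expXT, PowerSeries.coeff_mk, PowerSeries.coeff_log_pow, Polynomial.algebraMap_eq,
      Polynomial.C_mul]
    ring
  replace h := congrArg (Polynomial.coeff · m) (h.symm.trans (sum_congr rfl hterm))
  simp only [Polynomial.coeff_C_mul, Polynomial.finsetSum_coeff, Polynomial.coeff_X_pow, mul_ite,
    mul_one, mul_zero, sum_ite_eq, mem_range] at h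
  split_ifs at h with hm
  · field_simp at h
    rw [div_mul_eq_mul_div, eq_div_iff (by positivity), h]
  · rw [PowerSeries.coeff_pow_eq_zero_of_lt PowerSeries.constantCoeff_log (by omega), mul_zero]
    simpa [Nat.factorial_ne_zero] using h

noncomputable def egf (a : ℕ → ℚ[X]) : ℚ[X]⟦X⟧ :=
  PowerSeries.mk fun m => Polynomial.C ((m.factorial : ℚ)⁻¹) * a m

theorem C_factorial_mul_coeff_egf (a : ℕ → ℚ[X]) (n : ℕ) :
    Polynomial.C (n.factorial : ℚ) * PowerSeries.coeff n (egf a) = a n := by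
  rw [egf, PowerSeries.coeff_mk, ← mul_assoc, ← Polynomial.C_mul,
    mul_inv_cancel₀ (by positivity), Polynomial.C_1, one_mul]

theorem C_factorial_mul_coeff_egf_subst_log (a : ℕ → ℚ[X]) (n : ℕ) :
    Polynomial.C (n.factorial : ℚ) * PowerSeries.coeff n ((egf a).subst (log ℚ[X])) =
      ∑ l ∈ range (n + 1),
        Polynomial.C ((∏ i ∈ range n, (Polynomial.X - Polynomial.C (i : ℚ))).coeff l) * a l := by
  rw [PowerSeries.coeff_subst_eq_sum_range PowerSeries.constantCoeff_log, mul_sum]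
  refine sum_congr rfl fun l _ => ?_
  rw [egf, PowerSeries.coeff_mk, PowerSeries.coeff_log_pow, Polynomial.algebraMap_eq,
    coeff_prod_range_X_sub_C, div_eq_mul_inv]
  simp only [map_mul]
  ring

theorem egf_eq_egf_subst_log {k : ℕ} {D B : ℕ → ℚ[X]}
    (hD : logOneAddP ^ k * onePlusTX = PowerSeries.X ^ k * egf D)
    (hB : PowerSeries.X ^ k * expXT = (expP - 1) ^ k * egf B) :
    egf D = (egf B).subst (log ℚ[X]) := by
  have h := congrArg (PowerSeries.substAlgHom (R := ℚ[X]) (PowerSeries.HasSubst.log (A := ℚ[X]))) hB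
  rw [logOneAddP_eq_log] at hD
  simp only [map_mul, map_pow, map_sub, map_one, PowerSeries.coe_substAlgHom,
    PowerSeries.subst_X PowerSeries.HasSubst.log, expXT_subst_log, expP_eq_exp,
    PowerSeries.exp_subst_log, add_sub_cancel_left, hD] at h
  exact mul_left_cancel₀ (pow_ne_zero k PowerSeries.X_ne_zero) h

theorem daehee_poly_eq_stirling_bernoulli_poly_sum_general
    (k : ℕ) (n : ℕ)
    (D : ℕ → Polynomial ℚ)
    (hD : logOneAddP ^ k * onePlusTX
      = PowerSeries.X ^ k
          * PowerSeries.mk (fun m => Polynomial.C ((m.factorial : ℚ)⁻¹) * D m))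
    (S1 : ℕ → ℕ → ℤ)
    (hS1 : ∀ m : ℕ,
      (∏ i ∈ Finset.range m, (Polynomial.X - Polynomial.C (i : ℚ)))
        = ∑ l ∈ Finset.range (m + 1), Polynomial.C ((S1 m l : ℚ)) * Polynomial.X ^ l)
    (B : ℕ → Polynomial ℚ)
    (hB : (PowerSeries.X : PowerSeries (Polynomial ℚ)) ^ k * expXT
      = (expP - 1) ^ k
          * PowerSeries.mk (fun m => Polynomial.C ((m.factorial : ℚ)⁻¹) * B m)) :
    D n = ∑ l ∈ Finset.range (n + 1), Polynomial.C ((S1 n l : ℚ)) * B l := by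
  have hDB : egf D = (egf B).subst (log ℚ[X]) := egf_eq_egf_subst_log hD hB
  rw [← C_factorial_mul_coeff_egf D n, hDB, C_factorial_mul_coeff_egf_subst_log]
  refine sum_congr rfl fun l hl => ?_
  rw [hS1, Polynomial.finsetSum_coeff]
  simp only [Polynomial.coeff_C_mul_X_pow, sum_ite_eq, hl, if_true]

/-- For `n ≥ 0`, `k ≥ 1`, the Daehee polynomials of order `k`,
defined by `(log(1+t)/t)^k (1+t)^x = Σ_n D_n^(k)(x) t^n/n!` (encoded multiplicatively),
satisfy `D_n^(k)(x) = Σ_{l=0}^n S_1(n,l) B_l^{(k)}(x)` in `ℚ[x]`, where `B_l^{(k)}(x)`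
are the Bernoulli polynomials of order `k`. -/
theorem daehee_poly_eq_stirling_bernoulli_poly_sum
    (k : ℕ) (hk : 1 ≤ k) (n : ℕ)
    (D : ℕ → Polynomial ℚ)
    (hD : logOneAddP ^ k * onePlusTX
      = PowerSeries.X ^ k
          * PowerSeries.mk (fun m => Polynomial.C ((m.factorial : ℚ)⁻¹) * D m))
    (S1 : ℕ → ℕ → ℤ)
    (hS1 : ∀ m : ℕ,
      (∏ i ∈ Finset.range m, (Polynomial.X - Polynomial.C (i : ℚ)))
        = ∑ l ∈ Finset.range (m + 1), Polynomial.C ((S1 m l : ℚ)) * Polynomial.X ^ l)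
    (B : ℕ → Polynomial ℚ)
    (hB : (PowerSeries.X : PowerSeries (Polynomial ℚ)) ^ k * expXT
      = (expP - 1) ^ k
          * PowerSeries.mk (fun m => Polynomial.C ((m.factorial : ℚ)⁻¹) * B m)) :
    D n = ∑ l ∈ Finset.range (n + 1), Polynomial.C ((S1 n l : ℚ)) * B l :=
  daehee_poly_eq_stirling_bernoulli_poly_sum_general k n D hD S1 hS1 B hB
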